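/- arXiv:2502.08534 — 2 statements merged into one kernel-verified Lean document; each statement's English description precedes it below -/
import Mathlib

section
/- The St. Venant–Kirchhoff energy Ψ(F) = (λ/2)(tr E)² + μ tr(E²) with E = (FᵀF − I)/2 and λ, μ > 0, is convex as a function of C = FᵀF but is not rank-one convex in F, hence not polyconvex. -/
open Matrix

/-- `Ψ` is polyconvex if it factors as a convex function of `(F, cof F, det F)`,
where `cof F = (adjugate F)ᵀ`. -/
def Polyconvex (Ψ : Matrix (Fin 3) (Fin 3) ℝ → ℝ) : Prop :=
  ∃ Ψhat : Matrix (Fin 3) (Fin 3) ℝ × Matrix (Fin 3) (Fin 3) ℝ × ℝ → ℝ,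
    ConvexOn ℝ Set.univ Ψhat ∧
    ∀ F, Ψ F = Ψhat (F, (F.adjugate)ᵀ, F.det)

/-- The St. Venant–Kirchhoff energy as a function of the strain `E = (C - 1)/2`. -/
noncomputable def svkOfC (lam mu : ℝ) (C : Matrix (Fin 3) (Fin 3) ℝ) : ℝ :=
  (lam / 2) * (Matrix.trace ((1 / 2 : ℝ) • (C - 1))) ^ 2 +
    mu * Matrix.trace (((1 / 2 : ℝ) • (C - 1)) * ((1 / 2 : ℝ) • (C - 1)))

/-- The quadratic form appearing in the convexity defect identity. -/
noncomputable def svkQ (lam mu : ℝ) (S : Matrix (Fin 3) (Fin 3) ℝ) : ℝ :=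
  (lam / 2) * (Matrix.trace ((1/2:ℝ) • S))^2
    + mu * Matrix.trace (((1/2:ℝ) • S) * ((1/2:ℝ) • S))

lemma svk_defect (lam mu : ℝ) (C D : Matrix (Fin 3) (Fin 3) ℝ) (a b : ℝ)
    (hab : a + b = 1) :
    a * svkOfC lam mu C + b * svkOfC lam mu D - svkOfC lam mu (a • C + b • D)
      = a * b * svkQ lam mu (C - D) := by
  have hb : b = 1 - a := by linarith
  subst hb
  simp [svkOfC, svkQ, Matrix.trace_fin_three, Matrix.mul_apply, Fin.sum_univ_three,
    Matrix.smul_apply, Matrix.sub_apply, Matrix.one_apply, Matrix.add_apply]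
  ring

lemma svkQ_nonneg (lam mu : ℝ) (hlam : 0 < lam) (hmu : 0 < mu)
    (S : Matrix (Fin 3) (Fin 3) ℝ) (hS : Sᵀ = S) : 0 ≤ svkQ lam mu S := by
  have h01 : S 1 0 = S 0 1 := congrFun (congrFun hS 0) 1
  have h02 : S 2 0 = S 0 2 := congrFun (congrFun hS 0) 2
  have h12 : S 2 1 = S 1 2 := congrFun (congrFun hS 1) 2
  simp [svkQ, Matrix.trace_fin_three, Matrix.mul_apply, Fin.sum_univ_three,
    Matrix.smul_apply, h01, h02, h12]
  nlinarith [sq_nonneg (S 0 0), sq_nonneg (S 1 1), sq_nonneg (S 2 2),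
    sq_nonneg (S 0 1), sq_nonneg (S 0 2), sq_nonneg (S 1 2),
    sq_nonneg (S 0 0 + S 1 1 + S 2 2), mul_pos hlam hmu]

lemma svk_eval (lam mu t : ℝ) :
    svkOfC lam mu ((t • Matrix.vecMulVec ![(1:ℝ),0,0] ![(1:ℝ),0,0])ᵀ *
      (t • Matrix.vecMulVec ![(1:ℝ),0,0] ![(1:ℝ),0,0])) =
    lam/8*(t^2-3)^2 + mu/4*((t^2-1)^2+2) := by
  simp [svkOfC, Matrix.trace_fin_three, Matrix.mul_apply, Fin.sum_univ_three,
    Matrix.vecMulVec_apply, Matrix.smul_apply, Matrix.sub_apply, Matrix.one_apply,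
    Matrix.transpose_apply]
  ring

lemma svk_line_not_convex (lam mu : ℝ) (hlam : 0 < lam) (hmu : 0 < mu)
    (g : ℝ → ℝ) (hg : ∀ t, g t = lam/8*(t^2-3)^2 + mu/4*((t^2-1)^2+2)) :
    ¬ ConvexOn ℝ Set.univ g := by
  intro hc
  have h := hc.2 (Set.mem_univ (-1 : ℝ)) (Set.mem_univ (1 : ℝ))
    (by norm_num : (0:ℝ) ≤ 1/2) (by norm_num : (0:ℝ) ≤ 1/2) (by norm_num)
  have hmid : (1/2 : ℝ) • (-1 : ℝ) + (1/2 : ℝ) • (1 : ℝ) = 0 := by norm_num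
  rw [hmid] at h
  rw [hg 0, hg 1, hg (-1)] at h
  simp only [smul_eq_mul] at h
  nlinarith

theorem stVenantKirchhoff_convex_in_C_not_rankOneConvex (lam mu : ℝ)
    (hlam : 0 < lam) (hmu : 0 < mu) :
    ConvexOn ℝ {C : Matrix (Fin 3) (Fin 3) ℝ | Cᵀ = C} (svkOfC lam mu) ∧
    ¬ (∀ (F : Matrix (Fin 3) (Fin 3) ℝ) (a b : Fin 3 → ℝ),
        ConvexOn ℝ Set.univ
          (fun t : ℝ => svkOfC lam mu ((F + t • Matrix.vecMulVec a b)ᵀ *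
            (F + t • Matrix.vecMulVec a b)))) ∧
    ¬ Polyconvex (fun F => svkOfC lam mu (Fᵀ * F)) := by
  refine ⟨?_, ?_, ?_⟩
  · -- convexity in C on symmetric matrices
    constructor
    · intro C hC D hD a b ha hb hab
      show (a • C + b • D)ᵀ = a • C + b • D
      rw [Matrix.transpose_add, Matrix.transpose_smul, Matrix.transpose_smul,
        hC, hD]
    · intro C hC D hD a b ha hb hab
      have hid := svk_defect lam mu C D a b hab
      have hsym : (C - D)ᵀ = C - D := by
        rw [Matrix.transpose_sub, hC, hD]
      have hQ := svkQ_nonneg lam mu hlam hmu (C - D) hsym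
      simp only [smul_eq_mul]
      nlinarith [mul_nonneg ha hb]
  · -- not rank-one convex
    intro H
    have h := H 0 ![(1:ℝ),0,0] ![(1:ℝ),0,0]
    simp only [zero_add] at h
    exact svk_line_not_convex lam mu hlam hmu _ (fun t => svk_eval lam mu t) h
  · -- not polyconvex
    rintro ⟨Ψhat, hconv, heq⟩
    set M : Matrix (Fin 3) (Fin 3) ℝ := Matrix.vecMulVec ![(1:ℝ),0,0] ![(1:ℝ),0,0]
      with hM
    have hMof : ∀ t : ℝ, t • M = Matrix.of ![![t,0,0],![0,0,0],![0,0,0]] := by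
      intro t
      ext i j
      fin_cases i <;> fin_cases j <;>
        simp [hM, Matrix.vecMulVec_apply, Matrix.vecHead, Matrix.vecTail]
    have hadj : ∀ t : ℝ, (t • M).adjugate = 0 := by
      intro t
      rw [hMof t, Matrix.adjugate_fin_three]
      ext i j
      fin_cases i <;> fin_cases j <;> simp [Matrix.vecHead, Matrix.vecTail]
    have hdet : ∀ t : ℝ, (t • M).det = 0 := by
      intro t
      rw [hMof t, Matrix.det_fin_three]
      simp
    set g : ℝ → ℝ := fun t => Ψhat (t • M, 0, 0) with hgdef
    have hgconv : ConvexOn ℝ Set.univ g := by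
      refine ⟨convex_univ, ?_⟩
      intro x _ y _ a b ha hb hab
      have hkey : (((a • x + b • y) • M, (0 : Matrix (Fin 3) (Fin 3) ℝ), (0:ℝ)))
          = a • ((x • M, (0 : Matrix (Fin 3) (Fin 3) ℝ), (0:ℝ)))
            + b • ((y • M, (0 : Matrix (Fin 3) (Fin 3) ℝ), (0:ℝ))) := by
        refine Prod.ext ?_ (Prod.ext ?_ ?_)
        · show (a * x + b * y) • M = a • (x • M) + b • (y • M)
          rw [add_smul, smul_smul, smul_smul]
        · show (0 : Matrix (Fin 3) (Fin 3) ℝ) = a • 0 + b • 0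
          simp
        · show (0:ℝ) = a • (0:ℝ) + b • (0:ℝ)
          simp
      calc g (a • x + b • y) = Ψhat ((a • x + b • y) • M, 0, 0) := rfl
        _ = Ψhat (a • ((x • M, (0 : Matrix (Fin 3) (Fin 3) ℝ), (0:ℝ)))
              + b • ((y • M, (0 : Matrix (Fin 3) (Fin 3) ℝ), (0:ℝ)))) := by
            rw [hkey]
        _ ≤ a * g x + b * g y := by
            have := hconv.2 (Set.mem_univ (x • M, (0 : Matrix (Fin 3) (Fin 3) ℝ), (0:ℝ)))
              (Set.mem_univ (y • M, (0 : Matrix (Fin 3) (Fin 3) ℝ), (0:ℝ))) ha hb hab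
            simpa using this
    have hgval : ∀ t : ℝ, g t = lam/8*(t^2-3)^2 + mu/4*((t^2-1)^2+2) := by
      intro t
      have h1 := heq (t • M)
      have : g t = svkOfC lam mu ((t • M)ᵀ * (t • M)) := by
        rw [hgdef]
        simp only [h1, hadj t, hdet t, Matrix.transpose_zero]
      rw [this, hM]
      exact svk_eval lam mu t
    exact svk_line_not_convex lam mu hlam hmu g hgval hgconv
end

section
/- For every element P of the signed-permutation group Π₃ acting on ν ∈ ℝ³, there exists a linear map P̃ : ℝ⁷ → ℝ⁷ (given by a signed permutation of coordinates) such that m(P·ν) = P̃(m(ν)) for all ν ∈ ℝ³, where m(ν) = (ν₁, ν₂, ν₃, ν₁ν₂, ν₁ν₃, ν₂ν₃, ν₁ν₂ν₃). -/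
open Matrix

/-- The set `Π₃` of signed permutation matrices whose signs have product `1`. -/
def Pi3 : Set (Matrix (Fin 3) (Fin 3) ℝ) :=
  {M | ∃ (σ : Equiv.Perm (Fin 3)) (ε : Fin 3 → ℝ),
    (∀ i, ε i = 1 ∨ ε i = -1) ∧ ε 0 * ε 1 * ε 2 = 1 ∧
    M = (Equiv.Perm.permMatrix ℝ σ) * Matrix.diagonal ε}

/-- The elementary monomial map `m(ν) = (ν₁, ν₂, ν₃, ν₁ν₂, ν₁ν₃, ν₂ν₃, ν₁ν₂ν₃)`. -/
def monMap (ν : Fin 3 → ℝ) : Fin 7 → ℝ :=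
  ![ν 0, ν 1, ν 2, ν 0 * ν 1, ν 0 * ν 2, ν 1 * ν 2, ν 0 * ν 1 * ν 2]

def idxSet : Fin 7 → Finset (Fin 3) :=
  ![{0}, {1}, {2}, {0,1}, {0,2}, {1,2}, {0,1,2}]

def setIdx (S : Finset (Fin 3)) : Fin 7 :=
  if S = {0} then 0 else if S = {1} then 1 else if S = {2} then 2
  else if S = {0,1} then 3 else if S = {0,2} then 4
  else if S = {1,2} then 5 else 6

lemma idxSet_setIdx : ∀ S : Finset (Fin 3), S.Nonempty → idxSet (setIdx S) = S := by
  decide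

lemma setIdx_idxSet : ∀ i, setIdx (idxSet i) = i := by decide

lemma idxSet_nonempty : ∀ i, (idxSet i).Nonempty := by decide

lemma monMap_eq_prod (ν : Fin 3 → ℝ) (i : Fin 7) :
    monMap ν i = ∏ j ∈ idxSet i, ν j := by
  fin_cases i <;> norm_num [monMap, idxSet, Finset.prod_insert, Fin.ext_iff, mul_assoc]

lemma mulVec_perm_diag (σ : Equiv.Perm (Fin 3)) (ε ν : Fin 3 → ℝ) (j : Fin 3) :
    ((Equiv.Perm.permMatrix ℝ σ) * Matrix.diagonal ε).mulVec ν j = ε (σ j) * ν (σ j) := by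
  simp [mulVec, Matrix.mul_apply, Equiv.Perm.permMatrix, PEquiv.toMatrix_apply,
    Matrix.diagonal_apply, Equiv.toPEquiv, dotProduct, Finset.sum_ite_eq, Finset.mul_sum,
    ite_and]

theorem monMap_intertwines (P : Matrix (Fin 3) (Fin 3) ℝ) (hP : P ∈ Pi3) :
    ∃ (τ : Equiv.Perm (Fin 7)) (s : Fin 7 → ℝ),
      (∀ i, s i = 1 ∨ s i = -1) ∧
      (∀ (ν : Fin 3 → ℝ) (i : Fin 7),
        monMap (P.mulVec ν) i = s i * monMap ν (τ i)) ∧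
      (∀ ν : Fin 3 → ℝ, monMap (P.mulVec ν) 6 = monMap ν 6) := by
  obtain ⟨σ, ε, hε, hprod, rfl⟩ := hP
  have himg : ∀ (e : Equiv.Perm (Fin 3)) (i : Fin 7),
      idxSet (setIdx ((idxSet i).image e)) = (idxSet i).image e := fun e i =>
    idxSet_setIdx _ ((idxSet_nonempty i).image e)
  refine ⟨⟨fun i => setIdx ((idxSet i).image σ), fun i => setIdx ((idxSet i).image σ.symm),
      fun i => ?_, fun i => ?_⟩, fun i => ∏ j ∈ idxSet i, ε (σ j), fun i => ?_,
      fun ν i => ?_, fun ν => ?_⟩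
  · simp only [himg, Finset.image_image]
    simp [setIdx_idxSet]
  · simp only [himg, Finset.image_image]
    simp [setIdx_idxSet]
  · refine Finset.prod_induction _ (fun r => r = 1 ∨ r = -1) ?_ (Or.inl rfl)
      (fun j _ => hε (σ j))
    rintro a b (rfl | rfl) (rfl | rfl) <;> norm_num
  · rw [monMap_eq_prod, monMap_eq_prod]
    simp only [Equiv.coe_fn_mk, himg]
    rw [Finset.prod_image (fun a _ b _ h => σ.injective h), ← Finset.prod_mul_distrib]
    exact Finset.prod_congr rfl fun j _ => mulVec_perm_diag σ ε ν j
  · rw [monMap_eq_prod, monMap_eq_prod]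
    have h6 : idxSet 6 = Finset.univ := by decide
    rw [h6]
    rw [show ∀ f : Fin 3 → ℝ, ∏ j ∈ Finset.univ, f j = ∏ j, f j from fun _ => rfl]
    calc ∏ j, ((Equiv.Perm.permMatrix ℝ σ) * Matrix.diagonal ε).mulVec ν j
        = ∏ j, ε (σ j) * ν (σ j) := Finset.prod_congr rfl fun j _ => mulVec_perm_diag σ ε ν j
      _ = ∏ j, ε j * ν j := Equiv.prod_comp σ (fun j => ε j * ν j)
      _ = (∏ j, ε j) * ∏ j, ν j := Finset.prod_mul_distrib
      _ = ∏ j, ν j := by rw [Fin.prod_univ_three ε, hprod, one_mul]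
end
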